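/- arXiv:2402.05221 — 2 statements merged into one kernel-verified Lean document; each statement's English description precedes it below -/
import Mathlib

section
/- Let n ≥ 1 and 1 ≤ k ≤ n. For every partition λ of n, every S ∈ SYT(λ), and every partition ν (possibly empty) all of whose parts are at most n−1, the polynomial F_S^S · e_ν^{(k)} does not lie in the ideal 𝓘_k (here F_S^S denotes F_T^S with T = S); i.e., F_S^S · e_ν^{(k)} is nonzero in P_n^{(k)} = ℂ[𝐱,𝐲]/𝓘_k. -/
open MvPolynomial

noncomputable section

/-- The polynomial ring `ℂ[x₁,…,xₙ,y₁,…,yₙ]`; variable `Sum.inl i` is `xᵢ`,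
variable `Sum.inr i` is `yᵢ`. -/
abbrev PolyXY (n : ℕ) : Type := MvPolynomial (Fin n ⊕ Fin n) ℂ

/-- The diagonal action of `π ∈ Sₙ`: `π · f = f(x_{π(1)},…,x_{π(n)},y_{π(1)},…,y_{π(n)})`. -/
def diagAct {n : ℕ} (π : Equiv.Perm (Fin n)) (f : PolyXY n) : PolyXY n :=
  rename (Sum.map ⇑π ⇑π) f
/-- The cells of a Young diagram (French notation: a cell `(r, c)` lies in row `r`
counted from the bottom starting at `0`, and column `c` starting at `0`). -/
abbrev Cell (lam : YoungDiagram) : Type := {x // x ∈ lam.cells}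

/-- A bijective filling of the cells of `lam` with the `n` values (value `j : Fin n`
represents the entry `j+1`). -/
abbrev Tab (lam : YoungDiagram) (n : ℕ) : Type := Cell lam ≃ Fin n

def cellRow {lam : YoungDiagram} (b : Cell lam) : ℕ := b.1.1

def cellCol {lam : YoungDiagram} (b : Cell lam) : ℕ := b.1.2

/-- A filling is standard if entries increase left to right along rows and increase
up columns. -/
def IsSYT {lam : YoungDiagram} {n : ℕ} (T : Tab lam n) : Prop :=
  (∀ a b : Cell lam, cellRow a = cellRow b → cellCol a < cellCol b → T a < T b) ∧
  (∀ a b : Cell lam, cellCol a = cellCol b → cellRow a < cellRow b → T a < T b)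

/-- The row group `R(T)`: permutations sending each entry of `T` to an entry in the
same row. -/
def rowGroup {lam : YoungDiagram} {n : ℕ} (T : Tab lam n) : Finset (Equiv.Perm (Fin n)) :=
  Finset.univ.filter fun π => ∀ b : Cell lam, cellRow (T.symm (π (T b))) = cellRow b

/-- The column group `C(T)`: permutations sending each entry of `T` to an entry in the
same column. -/
def colGroup {lam : YoungDiagram} {n : ℕ} (T : Tab lam n) : Finset (Equiv.Perm (Fin n)) :=
  Finset.univ.filter fun π => ∀ b : Cell lam, cellCol (T.symm (π (T b))) = cellCol b

/-- The monomial `x_T^c y_T^d = ∏_{b ∈ λ} x_{T(b)}^{c(b)} y_{T(b)}^{d(b)}`. -/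
def tabMonomial {lam : YoungDiagram} {n : ℕ} (T : Tab lam n) (c d : Cell lam → ℕ) :
    PolyXY n :=
  ∏ b : Cell lam, (X (Sum.inl (T b)) ^ c b * X (Sum.inr (T b)) ^ d b)

/-- The higher Specht polynomial `F_T^{c,d} = ε_T(x_T^c y_T^d)`, where
`ε_T = Σ_{τ∈C(T)} Σ_{σ∈R(T)} sgn(τ)·τσ`. -/
def FTcd {lam : YoungDiagram} {n : ℕ} (T : Tab lam n) (c d : Cell lam → ℕ) : PolyXY n :=
  ∑ τ ∈ colGroup T, ∑ σ ∈ rowGroup T,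
    ((Equiv.Perm.sign τ : ℤ) : ℂ) • diagAct (τ * σ) (tabMonomial T c d)
/-- The row (from the bottom, `0`-indexed) containing the `1`-indexed entry `j` of `S`. -/
def rowOfVal {lam : YoungDiagram} {n : ℕ} (S : Tab lam n) (j : ℕ) : ℕ :=
  if h : j - 1 < n then cellRow (S.symm ⟨j - 1, h⟩) else 0

/-- The descent set of `S` (1-indexed): those `d ∈ {1,…,n−1}` such that `d+1` lies in a
strictly higher row of `S` than `d`. -/
def DesSet {lam : YoungDiagram} {n : ℕ} (S : Tab lam n) : Finset ℕ :=
  (Finset.Icc 1 (n - 1)).filter fun d => rowOfVal S d < rowOfVal S (d + 1)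

/-- The `μ`-cocharge tableau for the hook `μ = (n−k+1,1^{k−1})`: its value on the cell of
`S` containing (1-indexed) `j` is `#{d ∈ Des(S) : n−k+1 ≤ d ≤ j−1}`.  Here the cell `b`
contains the 1-indexed entry `(S b : ℕ) + 1`. -/
def ccTabMu {lam : YoungDiagram} {n : ℕ} (k : ℕ) (S : Tab lam n) (b : Cell lam) : ℕ :=
  ((DesSet S).filter fun d => n - k + 1 ≤ d ∧ d ≤ (S b : ℕ)).card

/-- The reverse `μ`-cocharge tableau: its value on the cell of `S` containing `j` is
`#{d ∈ Des(S) : j ≤ d ≤ n−k}`. -/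
def ccTabMu' {lam : YoungDiagram} {n : ℕ} (k : ℕ) (S : Tab lam n) (b : Cell lam) : ℕ :=
  ((DesSet S).filter fun d => (S b : ℕ) + 1 ≤ d ∧ d ≤ n - k).card

/-- The higher Specht polynomial `F_T^S = ε_T(xy_T^S)` for the hook `μ = (n−k+1,1^{k−1})`. -/
def FTS {lam : YoungDiagram} {n : ℕ} (k : ℕ) (T S : Tab lam n) : PolyXY n :=
  FTcd T (ccTabMu k S) (ccTabMu' k S)
/-- The ideal `𝓘_k`, generated by all products of `k` distinct `x`-variables, all products
of `n−k+1` distinct `y`-variables, and the products `x_i y_i`. -/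
def Ik (n k : ℕ) : Ideal (PolyXY n) :=
  Ideal.span
    ({p : PolyXY n | ∃ A : Finset (Fin n), A.card = k ∧ p = ∏ i ∈ A, X (Sum.inl i)} ∪
     {p : PolyXY n | ∃ B : Finset (Fin n), B.card = n - k + 1 ∧ p = ∏ j ∈ B, X (Sum.inr j)} ∪
     {p : PolyXY n | ∃ i : Fin n, p = X (Sum.inl i) * X (Sum.inr i)})

/-- `e_d^{(k)}`: the elementary symmetric polynomial `e_d` in the `x`-variables if
`d ≤ k−1`, and `e_{n−d}` in the `y`-variables if `d ≥ k`. -/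
def edk (n k d : ℕ) : PolyXY n :=
  if d ≤ k - 1 then rename Sum.inl (esymm (Fin n) ℂ d)
  else rename Sum.inr (esymm (Fin n) ℂ (n - d))

/-- `e_ν^{(k)} = ∏_i e_{ν_i}^{(k)}` for a partition `ν` given by its multiset of parts. -/
def enuk (n k : ℕ) (nu : Multiset ℕ) : PolyXY n := (nu.map (edk n k)).prod

/-!
Send to zero every variable except `x_i` for `i > n - k` and `y_i` for `i < n - k` (entries
indexed from `0`), i.e. map onto the polynomial ring in the surviving variables, a domain. Only
`k - 1` of the `x`'s and `n - k` of the `y`'s survive, and never both `x_i` and `y_i`, so `𝓘_k`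
is killed. The exponent of `xy_S^S` is supported on surviving variables, so its coefficient in
`F_S^S` survives, and it is nonzero: if `τσ` (`τ ∈ C(S)`, `σ ∈ R(S)`) fixes that exponent, it
fixes the run of every entry, and since runs strictly increase up the columns of `S` this forces
`τ = 1`; the coefficient is then the size of a stabilizer in `R(S)`. Each `e_d^{(k)}` contains a
squarefree monomial in surviving variables, so it survives too.
-/

open Finset

section Runs

variable {lam : YoungDiagram} {n : ℕ}

def rowOf (T : Tab lam n) (v : Fin n) : ℕ := cellRow (T.symm v)

def colOf (T : Tab lam n) (v : Fin n) : ℕ := cellCol (T.symm v)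

lemma eq_of_rowOf_eq_of_colOf_eq {T : Tab lam n} {v w : Fin n}
    (hr : rowOf T v = rowOf T w) (hc : colOf T v = colOf T w) : v = w :=
  T.symm.injective (Subtype.ext (Prod.ext hr hc))

lemma rowOf_apply_of_mem_rowGroup {T : Tab lam n} {σ : Equiv.Perm (Fin n)}
    (hσ : σ ∈ rowGroup T) (v : Fin n) : rowOf T (σ v) = rowOf T v := by
  simpa [rowOf] using (mem_filter.1 hσ).2 (T.symm v)

lemma colOf_apply_of_mem_colGroup {T : Tab lam n} {τ : Equiv.Perm (Fin n)}
    (hτ : τ ∈ colGroup T) (v : Fin n) : colOf T (τ v) = colOf T v := by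
  simpa [colOf] using (mem_filter.1 hτ).2 (T.symm v)

/-- Entries with equal `runIndex` form a run of `S`: a maximal interval of consecutive entries
containing no descent. -/
def runIndex (S : Tab lam n) (v : Fin n) : ℕ := #{d ∈ DesSet S | d ≤ (v : ℕ)}

lemma rowOfVal_succ (S : Tab lam n) (v : Fin n) : rowOfVal S (v + 1) = rowOf S v := by
  simp [rowOfVal, rowOf]

lemma rowOfVal_le_of_forall_notMem_DesSet {S : Tab lam n} {i j : ℕ} (hi : 1 ≤ i)
    (hij : i ≤ j) (hjn : j ≤ n) (h : ∀ d, i ≤ d → d < j → d ∉ DesSet S) :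
    rowOfVal S j ≤ rowOfVal S i := by
  induction j, hij using Nat.le_induction with
  | base => rfl
  | succ j hij ih =>
    have hd : j ∉ DesSet S := h j hij (by omega)
    simp only [DesSet, mem_filter, mem_Icc, not_and, not_lt] at hd
    exact (hd ⟨by omega, by omega⟩).trans (ih (by omega) fun d h₁ h₂ => h d h₁ (by omega))

lemma runIndex_lt_of_lt_of_rowOf_lt {S : Tab lam n} {u w : Fin n} (huw : u < w)
    (hrow : rowOf S u < rowOf S w) : runIndex S u < runIndex S w := by
  obtain ⟨d, hd, hud, hdw⟩ : ∃ d ∈ DesSet S, (u : ℕ) < d ∧ d ≤ w := by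
    by_contra! h
    have := rowOfVal_le_of_forall_notMem_DesSet (S := S) (i := u + 1) (j := w + 1)
      (by omega) (by omega) w.isLt fun d h₁ h₂ hd => by have := h d hd (by omega); omega
    rw [rowOfVal_succ, rowOfVal_succ] at this
    omega
  refine card_lt_card ((ssubset_iff_of_subset ?_).2 ⟨d, ?_, ?_⟩)
  · intro x hx
    simp only [mem_filter] at hx ⊢
    exact ⟨hx.1, hx.2.trans (Fin.le_of_lt huw)⟩
  · simp [hd, hdw]
  · simp [hud]

lemma runIndex_lt_of_colOf_eq_of_rowOf_lt {S : Tab lam n} (hS : IsSYT S) {u w : Fin n}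
    (hc : colOf S u = colOf S w) (hr : rowOf S u < rowOf S w) :
    runIndex S u < runIndex S w :=
  runIndex_lt_of_lt_of_rowOf_lt (by simpa using hS.2 (S.symm u) (S.symm w) hc hr) hr

/- Induction on the rows from the bottom: on row `r`, `τ` can only move entries upwards, which
weakly raises their runs; but `σ` permutes the row, so the total run over the row does not
change, hence no entry of the row moves. -/
theorem eq_one_of_runIndex_mul_apply_eq {S : Tab lam n} (hS : IsSYT S)
    {τ σ : Equiv.Perm (Fin n)} (hτ : τ ∈ colGroup S) (hσ : σ ∈ rowGroup S)
    (hrun : ∀ v, runIndex S (τ (σ v)) = runIndex S v) : τ = 1 := by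
  suffices h : ∀ r, ∀ w, rowOf S w = r → τ w = w from Equiv.ext fun w => h _ w rfl
  intro r
  induction r using Nat.strong_induction_on with
  | _ r ih =>
  have hup : ∀ w, rowOf S w = r → τ w = w ∨ r < rowOf S (τ w) := by
    intro w hw
    rcases lt_trichotomy (rowOf S (τ w)) r with hlt | heq | hgt
    · have := τ.injective (ih _ hlt (τ w) rfl)
      rw [this] at hlt
      omega
    · exact .inl (eq_of_rowOf_eq_of_colOf_eq (heq.trans hw.symm)
        (colOf_apply_of_mem_colGroup hτ w))
    · exact .inr hgt
  have hle : ∀ w ∈ ({w | rowOf S w = r} : Finset (Fin n)),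
      runIndex S w ≤ runIndex S (τ w) := by
    intro w hw
    rcases hup w (mem_filter.1 hw).2 with hfix | hgt
    · rw [hfix]
    · exact (runIndex_lt_of_colOf_eq_of_rowOf_lt hS (colOf_apply_of_mem_colGroup hτ w).symm
        (by rw [(mem_filter.1 hw).2]; exact hgt)).le
  have hsum : ∑ w with rowOf S w = r, runIndex S w =
      ∑ w with rowOf S w = r, runIndex S (τ w) := by
    refine sum_equiv σ (fun w => ?_) fun w _ => (hrun w).symm
    simp [rowOf_apply_of_mem_rowGroup hσ]
  have heq := (sum_eq_sum_iff_of_le hle).1 hsum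
  intro w hw
  refine (hup w hw).resolve_right fun hgt => ?_
  have := runIndex_lt_of_colOf_eq_of_rowOf_lt hS (colOf_apply_of_mem_colGroup hτ w).symm
    (hw ▸ hgt)
  have := heq w (by simp [hw])
  omega

end Runs

lemma card_filter_le_add_card_filter_lt_le (s : Finset ℕ) (a b : ℕ) :
    #{d ∈ s | d ≤ a} + #{d ∈ s | a < d ∧ d ≤ b} = #{d ∈ s | d ≤ max a b} := by
  rw [← card_union_of_disjoint (disjoint_filter.2 fun _ _ h h' => by omega), ← filter_or]
  exact congrArg card (filter_congr fun d _ => by omega)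

section Exponents

variable {lam : YoungDiagram} {n : ℕ}

lemma runIndex_add_ccTabMu' (k : ℕ) (S : Tab lam n) (b : Cell lam) :
    runIndex S (S b) + ccTabMu' k S b = #{d ∈ DesSet S | d ≤ n - k} + ccTabMu k S b := by
  have h₁ := card_filter_le_add_card_filter_lt_le (DesSet S) (S b) (n - k)
  have h₂ := card_filter_le_add_card_filter_lt_le (DesSet S) (n - k) (S b)
  rw [max_comm] at h₂
  exact h₁.trans h₂.symm

def tabExponent (T : Tab lam n) (c d : Cell lam → ℕ) : (Fin n ⊕ Fin n) →₀ ℕ :=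
  Finsupp.equivFunOnFinite.symm (Sum.elim (c ∘ T.symm) (d ∘ T.symm))

@[simp]
lemma tabExponent_inl (T : Tab lam n) (c d : Cell lam → ℕ) (i : Fin n) :
    tabExponent T c d (.inl i) = c (T.symm i) :=
  rfl

@[simp]
lemma tabExponent_inr (T : Tab lam n) (c d : Cell lam → ℕ) (i : Fin n) :
    tabExponent T c d (.inr i) = d (T.symm i) :=
  rfl

lemma tabMonomial_eq_monomial (T : Tab lam n) (c d : Cell lam → ℕ) :
    tabMonomial T c d = monomial (tabExponent T c d) 1 := by
  rw [monomial_eq, C_1, one_mul, Finsupp.prod_fintype _ _ fun _ => pow_zero _,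
    Fintype.prod_sum_type, tabMonomial, prod_mul_distrib,
    ← T.prod_comp, ← T.prod_comp]
  simp [tabExponent]

lemma diagAct_tabMonomial (π : Equiv.Perm (Fin n)) (T : Tab lam n) (c d : Cell lam → ℕ) :
    diagAct π (tabMonomial T c d) = tabMonomial (T.trans π) c d := by
  simp [diagAct, tabMonomial]

lemma apply_symm_eq_of_tabExponent_trans_eq {T : Tab lam n} {c d : Cell lam → ℕ}
    {π : Equiv.Perm (Fin n)} (h : tabExponent (T.trans π) c d = tabExponent T c d)
    (v : Fin n) : c (T.symm (π v)) = c (T.symm v) ∧ d (T.symm (π v)) = d (T.symm v) := by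
  have hx := DFunLike.congr_fun h (Sum.inl (π v))
  have hy := DFunLike.congr_fun h (Sum.inr (π v))
  simp only [tabExponent_inl, tabExponent_inr, Equiv.symm_trans_apply,
    Equiv.symm_apply_apply] at hx hy
  exact ⟨hx.symm, hy.symm⟩

lemma coeff_FTcd (T : Tab lam n) (c d : Cell lam → ℕ) :
    coeff (tabExponent T c d) (FTcd T c d) = ∑ τ ∈ colGroup T, ∑ σ ∈ rowGroup T,
      ((Equiv.Perm.sign τ : ℤ) : ℂ) *
        if tabExponent (T.trans (τ * σ)) c d = tabExponent T c d then 1 else 0 := by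
  simp only [FTcd, coeff_sum, coeff_smul, diagAct_tabMonomial]
  simp only [tabMonomial_eq_monomial, coeff_monomial, smul_eq_mul]

theorem coeff_FTS_self_ne_zero (k : ℕ) {S : Tab lam n} (hS : IsSYT S) :
    coeff (tabExponent S (ccTabMu k S) (ccTabMu' k S)) (FTS k S S) ≠ 0 := by
  have hτ : ∀ τ ∈ colGroup S, ∀ σ ∈ rowGroup S,
      tabExponent (S.trans (τ * σ)) (ccTabMu k S) (ccTabMu' k S) =
        tabExponent S (ccTabMu k S) (ccTabMu' k S) → τ = 1 := by
    intro τ hτ σ hσ h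
    refine eq_one_of_runIndex_mul_apply_eq hS hτ hσ fun v => ?_
    obtain ⟨hc, hd⟩ := apply_symm_eq_of_tabExponent_trans_eq h v
    have h₁ := runIndex_add_ccTabMu' k S (S.symm (τ (σ v)))
    have h₂ := runIndex_add_ccTabMu' k S (S.symm v)
    simp only [Equiv.apply_symm_apply] at h₁ h₂
    simp only [Equiv.Perm.coe_mul, Function.comp_apply] at hc hd
    omega
  rw [FTS, coeff_FTcd, sum_eq_single_of_mem 1 (by simp [colGroup])]
  · simp only [Equiv.Perm.sign_one, Units.val_one, Int.cast_one, one_mul, sum_boole]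
    exact Nat.cast_ne_zero.2
      (card_ne_zero_of_mem (a := 1) (by simp [rowGroup, Equiv.Perm.one_def]))
  · intro τ hτS hτ1
    exact sum_eq_zero fun σ hσ => by rw [if_neg fun h => hτ1 (hτ τ hτS σ hσ h), mul_zero]

end Exponents

section KillVariables

variable {n k : ℕ}

def IsKeptVar (n k : ℕ) : Fin n ⊕ Fin n → Prop :=
  Sum.elim (fun i => n - k < i) (fun i => i < n - k)

instance (n k : ℕ) : DecidablePred (IsKeptVar n k)
  | .inl i => inferInstanceAs (Decidable (n - k < (i : ℕ)))
  | .inr i => inferInstanceAs (Decidable ((i : ℕ) < n - k))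

def killUnkept (n k : ℕ) : PolyXY n →ₐ[ℂ] MvPolynomial {v // IsKeptVar n k v} ℂ :=
  killCompl Subtype.val_injective

lemma killUnkept_X_of_not_isKeptVar {v : Fin n ⊕ Fin n} (hv : ¬IsKeptVar n k v) :
    killUnkept n k (X v) = 0 := by
  simp [killUnkept, killCompl, hv]

lemma card_filter_isKeptVar_inl_add :
    #{i : Fin n | IsKeptVar n k (.inl i)} + min n (n - k + 1) = n := by
  have : #{i : Fin n | IsKeptVar n k (.inl i)} = #{i : Fin n | ¬(i : ℕ) < n - k + 1} :=
    congrArg card (filter_congr fun i _ => by simp only [IsKeptVar, Sum.elim_inl]; omega)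
  rw [this, ← Fin.card_filter_val_lt, add_comm, card_filter_add_card_filter_not, card_univ,
    Fintype.card_fin]

lemma card_filter_isKeptVar_inr : #{i : Fin n | IsKeptVar n k (.inr i)} = min n (n - k) :=
  Fin.card_filter_val_lt

lemma killUnkept_prod_X_eq_zero {g : Fin n → Fin n ⊕ Fin n} {A : Finset (Fin n)}
    (hA : #{i | IsKeptVar n k (g i)} < #A) : killUnkept n k (∏ i ∈ A, X (g i)) = 0 := by
  obtain ⟨i, hi, hkept⟩ : ∃ i ∈ A, ¬IsKeptVar n k (g i) := by
    by_contra! h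
    exact (card_le_card fun i hi => mem_filter.2 ⟨mem_univ i, h i hi⟩).not_gt hA
  rw [map_prod]
  exact prod_eq_zero hi (killUnkept_X_of_not_isKeptVar hkept)

theorem Ik_le_ker_killUnkept (hk : 1 ≤ k) : Ik n k ≤ RingHom.ker (killUnkept n k) := by
  rw [Ik, Ideal.span_le]
  rintro p ((⟨A, hA, rfl⟩ | ⟨B, hB, rfl⟩) | ⟨i, rfl⟩) <;> rw [SetLike.mem_coe, RingHom.mem_ker]
  · have := card_filter_isKeptVar_inl_add (n := n) (k := k)
    exact killUnkept_prod_X_eq_zero (by omega)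
  · have := card_filter_isKeptVar_inr (n := n) (k := k)
    exact killUnkept_prod_X_eq_zero (by omega)
  · by_cases h : IsKeptVar n k (.inl i)
    · have h' : ¬IsKeptVar n k (.inr i) := by
        simp only [IsKeptVar, Sum.elim_inl, Sum.elim_inr] at h ⊢
        omega
      rw [map_mul, killUnkept_X_of_not_isKeptVar h', mul_zero]
    · rw [map_mul, killUnkept_X_of_not_isKeptVar h, zero_mul]

lemma killUnkept_ne_zero_of_coeff_ne_zero {p : PolyXY n} {E : (Fin n ⊕ Fin n) →₀ ℕ}
    (hE : ∀ v ∈ E.support, IsKeptVar n k v) (hp : coeff E p ≠ 0) : killUnkept n k p ≠ 0 := by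
  intro h
  apply hp
  rw [← Finsupp.mapDomain_comapDomain _ Subtype.val_injective E
    fun v hv => ⟨⟨v, hE v hv⟩, rfl⟩, ← coeff_killCompl Subtype.val_injective]
  exact (congrArg (coeff _) h).trans (coeff_zero _)

lemma killUnkept_rename_esymm_ne_zero {g : Fin n → Fin n ⊕ Fin n} (hg : Function.Injective g)
    {A : Finset (Fin n)} (hA : ∀ i ∈ A, IsKeptVar n k (g i)) :
    killUnkept n k (rename g (esymm (Fin n) ℂ #A)) ≠ 0 := by
  classical
  refine killUnkept_ne_zero_of_coeff_ne_zero
    (E := (∑ i ∈ A, Finsupp.single i 1).mapDomain g) (fun v hv => ?_) ?_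
  · obtain ⟨i, hi, rfl⟩ := mem_image.1 (Finsupp.mapDomain_support hv)
    exact hA i (by simpa using Finsupp.support_finsetSum hi)
  · rw [coeff_rename_mapDomain _ hg, ← mem_support_iff, support_esymm]
    exact mem_image.2 ⟨A, by simp, rfl⟩

theorem killUnkept_edk_ne_zero (hkn : k ≤ n) (d : ℕ) : killUnkept n k (edk n k d) ≠ 0 := by
  unfold edk
  split_ifs with hd
  · have := card_filter_isKeptVar_inl_add (n := n) (k := k)
    obtain ⟨A, hA, rfl⟩ :=
      exists_subset_card_eq (s := {i : Fin n | IsKeptVar n k (.inl i)}) (n := d) (by omega)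
    exact killUnkept_rename_esymm_ne_zero Sum.inl_injective fun i hi => (mem_filter.1 (hA hi)).2
  · have := card_filter_isKeptVar_inr (n := n) (k := k)
    obtain ⟨B, hB, hcard⟩ :=
      exists_subset_card_eq (s := {i : Fin n | IsKeptVar n k (.inr i)}) (n := n - d) (by omega)
    rw [← hcard]
    exact killUnkept_rename_esymm_ne_zero Sum.inr_injective fun i hi => (mem_filter.1 (hB hi)).2

lemma isKeptVar_of_mem_support_tabExponent {lam : YoungDiagram} {S : Tab lam n}
    {v : Fin n ⊕ Fin n} (hv : v ∈ (tabExponent S (ccTabMu k S) (ccTabMu' k S)).support) :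
    IsKeptVar n k v := by
  rw [Finsupp.mem_support_iff] at hv
  cases v with
  | inl i =>
    rw [tabExponent_inl, ccTabMu] at hv
    obtain ⟨d, hd⟩ := card_pos.1 (Nat.pos_of_ne_zero hv)
    simp only [Equiv.apply_symm_apply, mem_filter] at hd
    exact show n - k < (i : ℕ) by omega
  | inr i =>
    rw [tabExponent_inr, ccTabMu'] at hv
    obtain ⟨d, hd⟩ := card_pos.1 (Nat.pos_of_ne_zero hv)
    simp only [Equiv.apply_symm_apply, mem_filter] at hd
    exact show (i : ℕ) < n - k by omega

end KillVariables

theorem stmt3_general (n k : ℕ) (hk1 : 1 ≤ k) (hkn : k ≤ n)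
    (lam : YoungDiagram)
    (S : Tab lam n) (hS : IsSYT S)
    (nu : Multiset ℕ) :
    FTS k S S * enuk n k nu ∉ Ik n k := by
  intro hmem
  have hF : killUnkept n k (FTS k S S) ≠ 0 :=
    killUnkept_ne_zero_of_coeff_ne_zero (fun _ => isKeptVar_of_mem_support_tabExponent)
      (coeff_FTS_self_ne_zero k hS)
  have he : killUnkept n k (enuk n k nu) ≠ 0 := by
    rw [enuk, map_multiset_prod, Multiset.map_map]
    refine Multiset.prod_ne_zero fun h => ?_
    obtain ⟨d, -, hd⟩ := Multiset.mem_map.1 h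
    exact killUnkept_edk_ne_zero hkn d hd
  exact mul_ne_zero hF he (by simpa using Ik_le_ker_killUnkept hk1 hmem)

/-- For every standard Young tableau `S` of a shape of size `n` and
every partition `ν` (possibly empty) with all parts at most `n−1`, the polynomial
`F_S^S · e_ν^{(k)}` does not lie in `𝓘_k`. -/
theorem stmt3 (n k : ℕ) (hn : 1 ≤ n) (hk1 : 1 ≤ k) (hkn : k ≤ n)
    (lam : YoungDiagram) (hlam : lam.card = n)
    (S : Tab lam n) (hS : IsSYT S)
    (nu : Multiset ℕ) (hnu : ∀ p ∈ nu, 1 ≤ p ∧ p ≤ n - 1) :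
    FTS k S S * enuk n k nu ∉ Ik n k :=
  stmt3_general n k hk1 hkn lam S hS nu
end
end

section
/- Let n ≥ 1, let λ be a partition of n, and let c, d be functions from the cells of λ to ℕ. Then span_ℂ{F_T^{c,d} : T ∈ Tab(λ)} = span_ℂ{F_T^{c,d} : T ∈ SYT(λ)} as subspaces of ℂ[𝐱,𝐲]. -/
open MvPolynomial

noncomputable section

section Aux
open Equiv Equiv.Perm Finset

variable {n : ℕ} {lam : YoungDiagram}

lemma diagAct_mul (π ρ : Perm (Fin n)) (f : PolyXY n) :
    diagAct (π * ρ) f = diagAct π (diagAct ρ f) := by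
  have h : (Sum.map ⇑π ⇑π ∘ Sum.map ⇑ρ ⇑ρ) = Sum.map ⇑(π * ρ) ⇑(π * ρ) := by
    funext x
    cases x <;> simp [Perm.mul_apply]
  rw [diagAct, diagAct, diagAct, rename_rename, h]

lemma diagAct_sum {ι : Type*} (s : Finset ι) (f : ι → PolyXY n) (π : Perm (Fin n)) :
    diagAct π (∑ i ∈ s, f i) = ∑ i ∈ s, diagAct π (f i) :=
  map_sum (rename _) f s

lemma diagAct_smul (π : Perm (Fin n)) (a : ℂ) (f : PolyXY n) :
    diagAct π (a • f) = a • diagAct π f := by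
  unfold diagAct
  rw [smul_eq_C_mul, smul_eq_C_mul, map_mul, rename_C]

/-- generic "preserve a statistic" group -/
def wGroup (T : Tab lam n) (w : Cell lam → ℕ) : Finset (Perm (Fin n)) :=
  Finset.univ.filter fun π => ∀ b : Cell lam, w (T.symm (π (T b))) = w b

lemma rowGroup_eq_wGroup (T : Tab lam n) : rowGroup T = wGroup T cellRow := rfl

lemma colGroup_eq_wGroup (T : Tab lam n) : colGroup T = wGroup T cellCol := rfl

lemma mem_wGroup {T : Tab lam n} {w : Cell lam → ℕ} {π : Perm (Fin n)} :
    π ∈ wGroup T w ↔ ∀ b : Cell lam, w (T.symm (π (T b))) = w b := by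
  simp [wGroup]

lemma one_mem_wGroup (T : Tab lam n) (w : Cell lam → ℕ) : (1 : Perm (Fin n)) ∈ wGroup T w := by
  rw [mem_wGroup]
  intro b
  simp

lemma mul_mem_wGroup {T : Tab lam n} {w : Cell lam → ℕ} {π ρ : Perm (Fin n)}
    (hπ : π ∈ wGroup T w) (hρ : ρ ∈ wGroup T w) : π * ρ ∈ wGroup T w := by
  rw [mem_wGroup] at hπ hρ ⊢
  intro b
  have h1 := hπ (T.symm (ρ (T b)))
  rw [Equiv.apply_symm_apply] at h1
  rw [Perm.mul_apply, h1, hρ b]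

lemma inv_mem_wGroup {T : Tab lam n} {w : Cell lam → ℕ} {π : Perm (Fin n)}
    (hπ : π ∈ wGroup T w) : π⁻¹ ∈ wGroup T w := by
  rw [mem_wGroup] at hπ ⊢
  intro b
  have h1 := hπ (T.symm (π⁻¹ (T b)))
  rw [Equiv.apply_symm_apply, ← Perm.mul_apply, mul_inv_cancel, Perm.one_apply] at h1
  rw [← h1, Equiv.symm_apply_apply]

lemma swap_mem_wGroup {T : Tab lam n} {w : Cell lam → ℕ} {u v : Fin n}
    (h : w (T.symm u) = w (T.symm v)) : Equiv.swap u v ∈ wGroup T w := by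
  rw [mem_wGroup]
  intro b
  rcases eq_or_ne (T b) u with h1 | h1
  · rw [h1, swap_apply_left, ← h, ← h1]
    simp
  · rcases eq_or_ne (T b) v with h2 | h2
    · rw [h2, swap_apply_right, h, ← h2]
      simp
    · rw [swap_apply_of_ne_of_ne h1 h2]
      simp

lemma mem_wGroup_trans {T : Tab lam n} {w : Cell lam → ℕ} {g π : Perm (Fin n)} :
    π ∈ wGroup (T.trans g) w ↔ g⁻¹ * π * g ∈ wGroup T w := by
  rw [mem_wGroup, mem_wGroup]
  apply forall_congr'
  intro b
  rw [Equiv.trans_apply, Equiv.symm_trans_apply, Perm.mul_apply, Perm.mul_apply]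
  rfl

lemma tabMonomial_trans (T : Tab lam n) (g : Perm (Fin n)) (c d : Cell lam → ℕ) :
    tabMonomial (T.trans g) c d = diagAct g (tabMonomial T c d) := by
  unfold tabMonomial diagAct
  rw [map_prod]
  apply Finset.prod_congr rfl
  intro b _
  simp [Equiv.trans_apply]

lemma sign_conj (g q : Perm (Fin n)) : sign (g⁻¹ * q * g) = sign q := by
  rw [map_mul, map_mul, sign_inv]
  rw [mul_comm (sign g) (sign q), mul_assoc, Int.units_mul_self, mul_one]

lemma FTcd_prod (T : Tab lam n) (c d : Cell lam → ℕ) :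
    FTcd T c d = ∑ p ∈ colGroup T ×ˢ rowGroup T,
      ((Equiv.Perm.sign p.1 : ℤ) : ℂ) • diagAct (p.1 * p.2) (tabMonomial T c d) := by
  rw [Finset.sum_product]
  rfl

lemma FTcd_trans (T : Tab lam n) (g : Perm (Fin n)) (c d : Cell lam → ℕ) :
    FTcd (T.trans g) c d = diagAct g (FTcd T c d) := by
  rw [FTcd_prod, FTcd_prod, diagAct_sum, tabMonomial_trans]
  apply Finset.sum_nbij' (i := fun p => (g⁻¹ * p.1 * g, g⁻¹ * p.2 * g))
    (j := fun p => (g * p.1 * g⁻¹, g * p.2 * g⁻¹))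
  · rintro ⟨τ, σ⟩ hp
    rw [Finset.mem_product] at hp ⊢
    rw [colGroup_eq_wGroup, rowGroup_eq_wGroup] at hp ⊢
    rw [mem_wGroup_trans, mem_wGroup_trans] at hp
    exact hp
  · rintro ⟨τ, σ⟩ hp
    rw [Finset.mem_product] at hp ⊢
    rw [colGroup_eq_wGroup, rowGroup_eq_wGroup] at hp
    rw [colGroup_eq_wGroup, rowGroup_eq_wGroup, mem_wGroup_trans, mem_wGroup_trans]
    constructor
    · have := hp.1
      group at this ⊢
      exact this
    · have := hp.2
      group at this ⊢
      exact this
  · rintro ⟨τ, σ⟩ _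
    ext <;> simp
  · rintro ⟨τ, σ⟩ _
    ext <;> simp
  · rintro ⟨τ, σ⟩ _
    rw [diagAct_smul, ← diagAct_mul]
    have h1 : sign τ = sign (g⁻¹ * τ * g) := (sign_conj g τ).symm
    have h2 : g * (g⁻¹ * τ * g * (g⁻¹ * σ * g)) = τ * σ * g := by group
    rw [← h2, diagAct_mul, ← h1]

lemma FTcd_smul_of_colGroup (T : Tab lam n) (c d : Cell lam → ℕ) {t : Perm (Fin n)}
    (ht : t ∈ colGroup T) :
    FTcd (T.trans t) c d = ((Equiv.Perm.sign t : ℤ) : ℂ) • FTcd T c d := by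
  rw [FTcd_trans, FTcd_prod, diagAct_sum, Finset.smul_sum]
  apply Finset.sum_nbij' (i := fun p => (t * p.1, p.2)) (j := fun p => (t⁻¹ * p.1, p.2))
  · rintro ⟨τ, σ⟩ hp
    rw [Finset.mem_product] at hp ⊢
    exact ⟨mul_mem_wGroup ht hp.1, hp.2⟩
  · rintro ⟨τ, σ⟩ hp
    rw [Finset.mem_product] at hp ⊢
    exact ⟨mul_mem_wGroup (inv_mem_wGroup ht) hp.1, hp.2⟩
  · rintro ⟨τ, σ⟩ _
    ext <;> simp
  · rintro ⟨τ, σ⟩ _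
    ext <;> simp
  · rintro ⟨τ, σ⟩ _
    have hsc : (sign t) * (sign (t * τ)) = sign τ := by
      rw [map_mul, ← mul_assoc, Int.units_mul_self, one_mul]
    have h2 : t * (τ * σ) = t * τ * σ := by group
    rw [diagAct_smul, ← diagAct_mul, smul_smul, h2]
    congr 1
    rw [← hsc]
    push_cast
    ring

def rowSym (T : Tab lam n) (c d : Cell lam → ℕ) : PolyXY n :=
  ∑ σ ∈ rowGroup T, diagAct σ (tabMonomial T c d)

lemma FTcd_eq_rowSym (T : Tab lam n) (c d : Cell lam → ℕ) :
    FTcd T c d = ∑ τ ∈ colGroup T, ((Equiv.Perm.sign τ : ℤ) : ℂ) • diagAct τ (rowSym T c d) := by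
  unfold FTcd rowSym
  apply Finset.sum_congr rfl
  intro τ _
  rw [diagAct_sum, Finset.smul_sum]
  apply Finset.sum_congr rfl
  intro σ _
  rw [diagAct_mul]

lemma rowSym_invariant (T : Tab lam n) (c d : Cell lam → ℕ) {σ₀ : Perm (Fin n)}
    (hσ₀ : σ₀ ∈ rowGroup T) : diagAct σ₀ (rowSym T c d) = rowSym T c d := by
  unfold rowSym
  rw [diagAct_sum]
  apply Finset.sum_nbij' (i := fun σ => σ₀ * σ) (j := fun σ => σ₀⁻¹ * σ)
  · intro σ hσ
    exact mul_mem_wGroup hσ₀ hσ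
  · intro σ hσ
    exact mul_mem_wGroup (inv_mem_wGroup hσ₀) hσ
  · intro σ _
    simp
  · intro σ _
    simp
  · intro σ _
    rw [← diagAct_mul]

def permsOn (E : Finset (Fin n)) : Finset (Perm (Fin n)) :=
  Finset.univ.filter fun g => ∀ x ∉ E, g x = x

lemma mem_permsOn {E : Finset (Fin n)} {g : Perm (Fin n)} :
    g ∈ permsOn E ↔ ∀ x ∉ E, g x = x := by
  simp [permsOn]

lemma one_mem_permsOn (E : Finset (Fin n)) : (1 : Perm (Fin n)) ∈ permsOn E := by
  rw [mem_permsOn]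
  intro x _
  rfl

lemma mul_mem_permsOn {E : Finset (Fin n)} {g h : Perm (Fin n)}
    (hg : g ∈ permsOn E) (hh : h ∈ permsOn E) : g * h ∈ permsOn E := by
  rw [mem_permsOn] at hg hh ⊢
  intro x hx
  rw [Perm.mul_apply, hh x hx, hg x hx]

lemma permsOn_image {E : Finset (Fin n)} {g : Perm (Fin n)} (hg : g ∈ permsOn E) :
    E.image g = E := by
  rw [mem_permsOn] at hg
  apply Finset.eq_of_subset_of_card_le
  · intro y hy
    rw [Finset.mem_image] at hy
    obtain ⟨x, hx, rfl⟩ := hy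
    by_contra h
    have := hg _ h
    have := g.injective this
    rw [← this] at hx
    exact h hx
  · rw [Finset.card_image_of_injective _ g.injective]

lemma garnir_inner (T : Tab lam n) (c d : Cell lam → ℕ) (A B : Finset (Fin n)) (j : ℕ)
    (hA : ∀ a ∈ A, cellCol (T.symm a) = j) (hB : ∀ b ∈ B, cellCol (T.symm b) = j + 1)
    (hcard : lam.colLen j < A.card + B.card)
    (τ : Perm (Fin n)) (hτ : τ ∈ colGroup T) :
    ∑ g ∈ permsOn (A ∪ B), ((Equiv.Perm.sign g : ℤ) : ℂ) • diagAct (g * τ) (rowSym T c d)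
      = 0 := by
  have hτinv : τ⁻¹ ∈ colGroup T := inv_mem_wGroup hτ
  rw [colGroup_eq_wGroup, mem_wGroup] at hτinv
  -- column of the cell of x in τ∘T equals column of cell of x in T
  have hcol : ∀ x : Fin n, cellCol (T.symm (τ⁻¹ x)) = cellCol (T.symm x) := by
    intro x
    have := hτinv (T.symm x)
    rwa [Equiv.apply_symm_apply] at this
  -- the row maps are injective on A and B
  have hinj : ∀ (C : Finset (Fin n)) (jc : ℕ), (∀ a ∈ C, cellCol (T.symm a) = jc) →
      Set.InjOn (fun a => cellRow (T.symm (τ⁻¹ a))) C := by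
    intro C jc hC a ha b hb hab
    have hca : cellCol (T.symm (τ⁻¹ a)) = jc := by rw [hcol]; exact hC a ha
    have hcb : cellCol (T.symm (τ⁻¹ b)) = jc := by rw [hcol]; exact hC b hb
    have hcell : T.symm (τ⁻¹ a) = T.symm (τ⁻¹ b) := by
      apply Subtype.ext
      apply Prod.ext
      · exact hab
      · show cellCol (T.symm (τ⁻¹ a)) = cellCol (T.symm (τ⁻¹ b))
        rw [hca, hcb]
    have := T.symm.injective hcell
    exact τ⁻¹.injective this
  -- rows land in range of column lengths
  have hrange : ∀ (C : Finset (Fin n)) (jc : ℕ), (∀ a ∈ C, cellCol (T.symm a) = jc) →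
      C.image (fun a => cellRow (T.symm (τ⁻¹ a))) ⊆ Finset.range (lam.colLen jc) := by
    intro C jc hC y hy
    rw [Finset.mem_image] at hy
    obtain ⟨a, ha, rfl⟩ := hy
    rw [Finset.mem_range, ← YoungDiagram.mem_iff_lt_colLen]
    have hmem : (T.symm (τ⁻¹ a)).1 ∈ lam := (lam.mem_cells _).1 (T.symm (τ⁻¹ a)).2
    have : (cellRow (T.symm (τ⁻¹ a)), jc) = (T.symm (τ⁻¹ a)).1 := by
      have h2 : cellCol (T.symm (τ⁻¹ a)) = jc := by rw [hcol]; exact hC a ha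
      rw [← h2]
      rfl
    rwa [this]
  set rA := A.image (fun a => cellRow (T.symm (τ⁻¹ a))) with hrA
  set rB := B.image (fun a => cellRow (T.symm (τ⁻¹ a))) with hrB
  have hcardA : rA.card = A.card := Finset.card_image_of_injOn (hinj A j hA)
  have hcardB : rB.card = B.card := Finset.card_image_of_injOn (hinj B (j + 1) hB)
  have hsubA : rA ⊆ Finset.range (lam.colLen j) := hrange A j hA
  have hsubB : rB ⊆ Finset.range (lam.colLen j) := by
    apply (hrange B (j + 1) hB).trans
    intro x hx
    rw [Finset.mem_range] at hx ⊢
    exact lt_of_lt_of_le hx (lam.colLen_anti j (j + 1) (Nat.le_succ j))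
  have hinter : (rA ∩ rB).Nonempty := by
    rw [← Finset.card_pos]
    have h1 : (rA ∪ rB).card ≤ lam.colLen j := by
      have := Finset.card_le_card (Finset.union_subset hsubA hsubB)
      simpa using this
    have h2 := Finset.card_union_add_card_inter rA rB
    omega
  obtain ⟨r, hr⟩ := hinter
  rw [Finset.mem_inter] at hr
  obtain ⟨a, ha, hra⟩ := Finset.mem_image.1 hr.1
  obtain ⟨b, hb, hrb⟩ := Finset.mem_image.1 hr.2
  have hab : a ≠ b := by
    intro h
    have h1 := hA a ha
    have h2 := hB b hb
    rw [h] at h1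
    omega
  set t := Equiv.swap a b with hts
  have htmem : t ∈ permsOn (A ∪ B) := by
    rw [mem_permsOn]
    intro x hx
    rw [Finset.mem_union] at hx
    push_neg at hx
    apply swap_apply_of_ne_of_ne
    · intro h; exact hx.1 (h ▸ ha)
    · intro h; exact hx.2 (h ▸ hb)
  have hrow : τ⁻¹ * t * τ ∈ rowGroup T := by
    have hconj : τ⁻¹ * t * τ = Equiv.swap (τ⁻¹ a) (τ⁻¹ b) := by
      rw [hts, swap_apply_apply τ⁻¹ a b, inv_inv]
    rw [hconj, rowGroup_eq_wGroup]
    apply swap_mem_wGroup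
    rw [hra, hrb]
  have hkey : ∀ g : Perm (Fin n), diagAct (g * t * τ) (rowSym T c d)
      = diagAct (g * τ) (rowSym T c d) := by
    intro g
    have h1 : g * t * τ = (g * τ) * (τ⁻¹ * t * τ) := by group
    rw [h1, diagAct_mul, rowSym_invariant T c d hrow]
  have hsignt : sign t = -1 := sign_swap hab
  have hflip : ∑ g ∈ permsOn (A ∪ B), ((sign g : ℤ) : ℂ) • diagAct (g * τ) (rowSym T c d)
      = ∑ g ∈ permsOn (A ∪ B), (-((sign g : ℤ) : ℂ)) • diagAct (g * τ) (rowSym T c d) := by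
    apply Finset.sum_nbij' (i := fun g => g * t) (j := fun g => g * t)
    · intro g hg
      exact mul_mem_permsOn hg htmem
    · intro g hg
      exact mul_mem_permsOn hg htmem
    · intro g _
      rw [hts, mul_swap_mul_self]
    · intro g _
      rw [hts, mul_swap_mul_self]
    · intro g _
      have h1 : diagAct (g * τ) (rowSym T c d) = diagAct ((g * t) * τ) (rowSym T c d) :=
        (hkey g).symm
      rw [h1]
      congr 1
      rw [map_mul, hsignt]
      push_cast
      ring
  have h2 : (2 : ℂ) • ∑ g ∈ permsOn (A ∪ B),
      ((sign g : ℤ) : ℂ) • diagAct (g * τ) (rowSym T c d) = 0 := by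
    rw [two_smul]
    nth_rewrite 2 [hflip]
    rw [← Finset.sum_add_distrib]
    apply Finset.sum_eq_zero
    intro g _
    rw [← add_smul]
    simp
  have := smul_eq_zero.1 h2
  simpa using this

lemma garnir_span (T : Tab lam n) (c d : Cell lam → ℕ) (A B : Finset (Fin n)) (j : ℕ)
    (hA : ∀ a ∈ A, cellCol (T.symm a) = j) (hB : ∀ b ∈ B, cellCol (T.symm b) = j + 1)
    (hcard : lam.colLen j < A.card + B.card)
    (S : Submodule ℂ (PolyXY n))
    (hg : ∀ g ∈ permsOn (A ∪ B), B.image g ≠ B → FTcd (T.trans g) c d ∈ S) :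
    FTcd T c d ∈ S := by
  have hdisj : Disjoint A B := by
    rw [Finset.disjoint_left]
    intro x hxA hxB
    have h1 := hA x hxA
    have h2 := hB x hxB
    omega
  -- the Garnir relation: the signed sum over permsOn (A ∪ B) vanishes
  have hzero : ∑ g ∈ permsOn (A ∪ B), ((sign g : ℤ) : ℂ) • FTcd (T.trans g) c d = 0 := by
    have hterm : ∀ g : Perm (Fin n), ((sign g : ℤ) : ℂ) • FTcd (T.trans g) c d
        = ∑ τ ∈ colGroup T, ((sign τ : ℤ) : ℂ) •
            (((sign g : ℤ) : ℂ) • diagAct (g * τ) (rowSym T c d)) := by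
      intro g
      rw [FTcd_trans, FTcd_eq_rowSym, diagAct_sum, Finset.smul_sum]
      apply Finset.sum_congr rfl
      intro τ _
      rw [diagAct_smul, ← diagAct_mul, smul_comm]
    calc ∑ g ∈ permsOn (A ∪ B), ((sign g : ℤ) : ℂ) • FTcd (T.trans g) c d
        = ∑ g ∈ permsOn (A ∪ B), ∑ τ ∈ colGroup T, ((sign τ : ℤ) : ℂ) •
            (((sign g : ℤ) : ℂ) • diagAct (g * τ) (rowSym T c d)) := by
          exact Finset.sum_congr rfl fun g _ => hterm g
      _ = ∑ τ ∈ colGroup T, ((sign τ : ℤ) : ℂ) •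
            (∑ g ∈ permsOn (A ∪ B), ((sign g : ℤ) : ℂ) • diagAct (g * τ) (rowSym T c d)) := by
          rw [Finset.sum_comm]
          exact Finset.sum_congr rfl fun τ _ => (Finset.smul_sum).symm
      _ = 0 := by
          apply Finset.sum_eq_zero
          intro τ hτ
          rw [garnir_inner T c d A B j hA hB hcard τ hτ, smul_zero]
  -- split into the part stabilizing B and the rest
  set P := permsOn (A ∪ B) with hP
  set Q : Perm (Fin n) → Prop := fun g => B.image g = B with hQ
  have hsplit := Finset.sum_filter_add_sum_filter_not P Q
    (fun g => ((sign g : ℤ) : ℂ) • FTcd (T.trans g) c d)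
  -- on the stabilizing part, each summand is FTcd T c d
  have hstab : ∀ g ∈ P.filter Q, ((sign g : ℤ) : ℂ) • FTcd (T.trans g) c d = FTcd T c d := by
    intro g hgm
    rw [Finset.mem_filter] at hgm
    obtain ⟨hgP, hgQ⟩ := hgm
    have himgE : (A ∪ B).image g = A ∪ B := permsOn_image hgP
    have himgA : A.image g = A := by
      apply Finset.eq_of_subset_of_card_le
      · intro y hy
        rw [Finset.mem_image] at hy
        obtain ⟨x, hx, rfl⟩ := hy
        have hyE : g x ∈ A ∪ B := by
          rw [← himgE]
          exact Finset.mem_image_of_mem g (Finset.mem_union_left B hx)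
        rw [Finset.mem_union] at hyE
        rcases hyE with h | h
        · exact h
        · exfalso
          rw [← hgQ, Finset.mem_image] at h
          obtain ⟨x', hx', hxx⟩ := h
          have := g.injective hxx
          rw [this] at hx'
          exact (Finset.disjoint_left.1 hdisj hx hx')
      · rw [Finset.card_image_of_injective _ g.injective]
    have hgcol : g ∈ colGroup T := by
      rw [colGroup_eq_wGroup, mem_wGroup]
      intro b
      rcases Finset.decidableMem (T b) A with hTb | hTb
      swap
      · have h1 : g (T b) ∈ A := by
          rw [← himgA]
          exact Finset.mem_image_of_mem g hTb
        have h2 := hA _ h1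
        have h3 := hA _ hTb
        rw [Equiv.symm_apply_apply] at h3
        rw [h2, h3]
      · rcases Finset.decidableMem (T b) B with hTb2 | hTb2
        swap
        · have h1 : g (T b) ∈ B := by
            rw [← hgQ]
            exact Finset.mem_image_of_mem g hTb2
          have h2 := hB _ h1
          have h3 := hB _ hTb2
          rw [Equiv.symm_apply_apply] at h3
          rw [h2, h3]
        · have h1 : T b ∉ A ∪ B := by
            rw [Finset.mem_union]
            tauto
          rw [mem_permsOn] at hgP
          rw [hgP _ h1, Equiv.symm_apply_apply]
    rw [FTcd_smul_of_colGroup T c d hgcol, smul_smul]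
    have : ((sign g : ℤ) : ℂ) * ((sign g : ℤ) : ℂ) = 1 := by
      rcases Int.units_eq_one_or (sign g) with h | h <;> simp [h]
    rw [this, one_smul]
  have hconst : ∑ g ∈ P.filter Q, ((sign g : ℤ) : ℂ) • FTcd (T.trans g) c d
      = ((P.filter Q).card : ℂ) • FTcd T c d := by
    rw [Finset.sum_congr rfl hstab, Finset.sum_const, Nat.cast_smul_eq_nsmul ℂ]
  have hcardQ : 0 < (P.filter Q).card := by
    rw [Finset.card_pos]
    refine ⟨1, ?_⟩
    rw [Finset.mem_filter]
    exact ⟨one_mem_permsOn _, by simp [hQ]⟩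
  have hrest : ∑ g ∈ P.filter (fun g => ¬ Q g), ((sign g : ℤ) : ℂ) • FTcd (T.trans g) c d
      ∈ S := by
    apply Submodule.sum_mem
    intro g hgm
    rw [Finset.mem_filter] at hgm
    exact Submodule.smul_mem S _ (hg g hgm.1 hgm.2)
  have hFT : ((P.filter Q).card : ℂ) • FTcd T c d ∈ S := by
    rw [← hconst]
    have heq : ∑ g ∈ P.filter Q, ((sign g : ℤ) : ℂ) • FTcd (T.trans g) c d
        = - ∑ g ∈ P.filter (fun g => ¬ Q g), ((sign g : ℤ) : ℂ) • FTcd (T.trans g) c d := by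
      rw [eq_neg_iff_add_eq_zero, hsplit] at *
      exact hzero
    rw [heq]
    exact Submodule.neg_mem S hrest
  have hne : ((P.filter Q).card : ℂ) ≠ 0 := by
    simp only [ne_eq, Nat.cast_eq_zero]
    omega
  have := Submodule.smul_mem S (((P.filter Q).card : ℂ)⁻¹) hFT
  rwa [smul_smul, inv_mul_cancel₀ hne, one_smul] at this

/-! ### measures -/

def m1 (T : Tab lam n) : ℕ := ∑ b : Cell lam, (T b : ℕ) * cellCol b

def m2 (T : Tab lam n) : ℕ := ∑ b : Cell lam, (T b : ℕ) * cellRow b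

lemma cellCol_lt_card (b : Cell lam) : cellCol b < lam.card := by
  have hm : ((cellRow b, cellCol b) : ℕ × ℕ) ∈ lam := (lam.mem_cells b.1).1 b.2
  have hsub : (Finset.range (cellCol b + 1)).image (fun j => ((cellRow b, j) : ℕ × ℕ))
      ⊆ lam.cells := by
    intro p hp
    rw [Finset.mem_image] at hp
    obtain ⟨j, hj, rfl⟩ := hp
    rw [Finset.mem_range] at hj
    rw [YoungDiagram.mem_cells]
    exact lam.up_left_mem (le_refl _) (Nat.lt_succ_iff.1 hj) hm
  have hcard := Finset.card_le_card hsub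
  rw [Finset.card_image_of_injective _ (fun x y h => by simpa using h),
    Finset.card_range] at hcard
  have : lam.cells.card = lam.card := rfl
  omega

lemma cellRow_lt_card (b : Cell lam) : cellRow b < lam.card := by
  have hm : ((cellRow b, cellCol b) : ℕ × ℕ) ∈ lam := (lam.mem_cells b.1).1 b.2
  have hsub : (Finset.range (cellRow b + 1)).image (fun i => ((i, cellCol b) : ℕ × ℕ))
      ⊆ lam.cells := by
    intro p hp
    rw [Finset.mem_image] at hp
    obtain ⟨i, hi, rfl⟩ := hp
    rw [Finset.mem_range] at hi
    rw [YoungDiagram.mem_cells]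
    exact lam.up_left_mem (Nat.lt_succ_iff.1 hi) (le_refl _) hm
  have hcard := Finset.card_le_card hsub
  rw [Finset.card_image_of_injective _ (fun x y h => by simpa using h),
    Finset.card_range] at hcard
  have : lam.cells.card = lam.card := rfl
  omega

lemma m_le (hlam : lam.card = n) (T : Tab lam n) (w : Cell lam → ℕ) (hw : ∀ b, w b < n) :
    (∑ b : Cell lam, (T b : ℕ) * w b) ≤ n ^ 3 := by
  have h1 : ∀ b : Cell lam, (T b : ℕ) * w b ≤ n * n := fun b =>
    Nat.mul_le_mul (Nat.le_of_lt (T b).isLt) (Nat.le_of_lt (hw b))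
  have h2 := Finset.sum_le_card_nsmul Finset.univ (fun b : Cell lam => (T b : ℕ) * w b)
    (n * n) (fun b _ => h1 b)
  have h3 : (Finset.univ : Finset (Cell lam)).card = n := by
    rw [Finset.card_univ, Fintype.card_coe]
    exact hlam
  rw [h3, smul_eq_mul] at h2
  calc (∑ b : Cell lam, (T b : ℕ) * w b) ≤ n * (n * n) := h2
    _ = n ^ 3 := by ring

lemma m1_le (hlam : lam.card = n) (T : Tab lam n) : m1 T ≤ n ^ 3 :=
  m_le hlam T cellCol (fun b => hlam ▸ cellCol_lt_card b)

lemma m2_le (hlam : lam.card = n) (T : Tab lam n) : m2 T ≤ n ^ 3 :=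
  m_le hlam T cellRow (fun b => hlam ▸ cellRow_lt_card b)

lemma swap_weight (T : Tab lam n) {a b : Cell lam} (hab : a ≠ b) (w : Cell lam → ℕ) :
    (∑ x : Cell lam, ((Equiv.swap (T a) (T b) (T x) : ℕ) : ℤ) * (w x : ℤ))
      = (∑ x : Cell lam, ((T x : ℕ) : ℤ) * (w x : ℤ))
        + (((T a : ℕ) : ℤ) - ((T b : ℕ) : ℤ)) * ((w b : ℤ) - (w a : ℤ)) := by
  have hb' : b ∈ (Finset.univ : Finset (Cell lam)).erase a :=
    Finset.mem_erase.2 ⟨fun h => hab h.symm, Finset.mem_univ b⟩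
  have key : ∀ f : Cell lam → ℤ,
      (∑ x : Cell lam, f x) = f a + f b + ∑ x ∈ ((Finset.univ : Finset (Cell lam)).erase a).erase b, f x := by
    intro f
    rw [← Finset.add_sum_erase _ f (Finset.mem_univ a), ← Finset.add_sum_erase _ f hb',
      ← add_assoc]
  rw [key (fun x => ((Equiv.swap (T a) (T b) (T x) : ℕ) : ℤ) * (w x : ℤ)),
    key (fun x => ((T x : ℕ) : ℤ) * (w x : ℤ))]
  have hrest : ∑ x ∈ ((Finset.univ : Finset (Cell lam)).erase a).erase b,
        ((Equiv.swap (T a) (T b) (T x) : ℕ) : ℤ) * (w x : ℤ)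
      = ∑ x ∈ ((Finset.univ : Finset (Cell lam)).erase a).erase b,
        ((T x : ℕ) : ℤ) * (w x : ℤ) := by
    apply Finset.sum_congr rfl
    intro x hx
    rw [Finset.mem_erase, Finset.mem_erase] at hx
    have h1 : T x ≠ T a := fun h => hx.2.1 (T.injective h)
    have h2 : T x ≠ T b := fun h => hx.1 (T.injective h)
    rw [swap_apply_of_ne_of_ne h1 h2]
  rw [hrest, swap_apply_left, swap_apply_right]
  ring

lemma m1_swap_same_col (T : Tab lam n) {a b : Cell lam} (hab : a ≠ b)
    (hcc : cellCol a = cellCol b) :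
    m1 (T.trans (Equiv.swap (T a) (T b))) = m1 T := by
  have h := swap_weight T hab cellCol
  rw [hcc, sub_self, mul_zero, add_zero] at h
  have h2 : (m1 (T.trans (Equiv.swap (T a) (T b))) : ℤ) = (m1 T : ℤ) := by
    unfold m1
    push_cast
    exact h
  exact_mod_cast h2

lemma m2_swap_gt (T : Tab lam n) {a b : Cell lam} (hrr : cellRow a < cellRow b)
    (hvv : (T b : ℕ) < (T a : ℕ)) :
    m2 T < m2 (T.trans (Equiv.swap (T a) (T b))) := by
  have hab : a ≠ b := fun h => by rw [h] at hrr; exact lt_irrefl _ hrr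
  have h := swap_weight T hab cellRow
  have h2 : (m2 (T.trans (Equiv.swap (T a) (T b))) : ℤ) = (m2 T : ℤ)
      + (((T a : ℕ) : ℤ) - ((T b : ℕ) : ℤ)) * ((cellRow b : ℤ) - (cellRow a : ℤ)) := by
    unfold m2
    push_cast
    exact h
  have hpos : (0 : ℤ) < (((T a : ℕ) : ℤ) - ((T b : ℕ) : ℤ)) * ((cellRow b : ℤ) - (cellRow a : ℤ)) := by
    apply mul_pos
    · omega
    · omega
  omega

lemma sum_lt_sum_fin (X Y : Finset (Fin n)) (hc : X.card = Y.card) (hne : Y.Nonempty)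
    (h : ∀ x ∈ X, ∀ y ∈ Y, (y : ℕ) < (x : ℕ)) :
    (∑ y ∈ Y, ((y : ℕ) : ℤ)) < ∑ x ∈ X, ((x : ℕ) : ℤ) := by
  have : Nonempty {y // y ∈ Y} := by
    obtain ⟨y, hy⟩ := hne
    exact ⟨⟨y, hy⟩⟩
  have e : {y // y ∈ Y} ≃ {x // x ∈ X} :=
    Fintype.equivOfCardEq (by rw [Fintype.card_coe, Fintype.card_coe, hc])
  rw [← Finset.sum_coe_sort Y (fun y => ((y : ℕ) : ℤ)),
    ← Finset.sum_coe_sort X (fun x => ((x : ℕ) : ℤ)),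
    ← Equiv.sum_comp e (fun i : {x // x ∈ X} => ((i.1 : ℕ) : ℤ))]
  apply Finset.sum_lt_sum_of_nonempty Finset.univ_nonempty
  intro i _
  exact_mod_cast h (e i).1 (e i).2 i.1 i.2

lemma m1_garnir (T : Tab lam n) (A B : Finset (Fin n)) (j : ℕ)
    (hA : ∀ a ∈ A, cellCol (T.symm a) = j) (hB : ∀ b ∈ B, cellCol (T.symm b) = j + 1)
    (hdisj : Disjoint A B)
    {g : Perm (Fin n)} (hg : g ∈ permsOn (A ∪ B)) :
    (m1 (T.trans g) : ℤ) = (m1 T : ℤ)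
      + ((∑ x ∈ B.image g, ((x : ℕ) : ℤ)) - ∑ x ∈ B, ((x : ℕ) : ℤ)) := by
  have key : ∀ v : Fin n → ℤ, (∑ x : Cell lam, v (T x)) = ∑ y : Fin n, v y :=
    fun v => Equiv.sum_comp T v
  have e1 : (m1 (T.trans g) : ℤ) = ∑ y : Fin n, ((g y : ℕ) : ℤ) * (cellCol (T.symm y) : ℤ) := by
    unfold m1
    push_cast
    rw [← key (fun y => ((g y : ℕ) : ℤ) * (cellCol (T.symm y) : ℤ))]
    apply Finset.sum_congr rfl
    intro x _
    rw [Equiv.symm_apply_apply]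
    rfl
  have e2 : (m1 T : ℤ) = ∑ y : Fin n, ((y : ℕ) : ℤ) * (cellCol (T.symm y) : ℤ) := by
    unfold m1
    push_cast
    rw [← key (fun y => ((y : ℕ) : ℤ) * (cellCol (T.symm y) : ℤ))]
    apply Finset.sum_congr rfl
    intro x _
    rw [Equiv.symm_apply_apply]
  rw [e1, e2]
  have e3 : (∑ y : Fin n, ((g y : ℕ) : ℤ) * (cellCol (T.symm y) : ℤ))
      - (∑ y : Fin n, ((y : ℕ) : ℤ) * (cellCol (T.symm y) : ℤ))
      = ∑ y : Fin n, (((g y : ℕ) : ℤ) - ((y : ℕ) : ℤ)) * (cellCol (T.symm y) : ℤ) := by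
    rw [← Finset.sum_sub_distrib]
    apply Finset.sum_congr rfl
    intro y _
    ring
  have e4 : ∑ y : Fin n, (((g y : ℕ) : ℤ) - ((y : ℕ) : ℤ)) * (cellCol (T.symm y) : ℤ)
      = ∑ y ∈ A ∪ B, (((g y : ℕ) : ℤ) - ((y : ℕ) : ℤ)) * (cellCol (T.symm y) : ℤ) := by
    symm
    apply Finset.sum_subset (Finset.subset_univ _)
    intro y _ hy
    rw [mem_permsOn] at hg
    rw [hg y hy, sub_self, zero_mul]
  have e5 : ∑ y ∈ A ∪ B, (((g y : ℕ) : ℤ) - ((y : ℕ) : ℤ)) * (cellCol (T.symm y) : ℤ)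
      = (∑ y ∈ A, (((g y : ℕ) : ℤ) - ((y : ℕ) : ℤ)) * (j : ℤ))
        + ∑ y ∈ B, (((g y : ℕ) : ℤ) - ((y : ℕ) : ℤ)) * ((j : ℤ) + 1) := by
    rw [Finset.sum_union hdisj]
    congr 1
    · apply Finset.sum_congr rfl
      intro y hy
      rw [hA y hy]
    · apply Finset.sum_congr rfl
      intro y hy
      rw [hB y hy]
      push_cast
      ring
  have hsumE : (∑ y ∈ A ∪ B, ((g y : ℕ) : ℤ)) = ∑ y ∈ A ∪ B, ((y : ℕ) : ℤ) := by
    have h1 : (∑ y ∈ A ∪ B, ((g y : ℕ) : ℤ))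
        = ∑ x ∈ (A ∪ B).image g, ((x : ℕ) : ℤ) := by
      rw [Finset.sum_image (fun x _ y _ h => g.injective h)]
    rw [h1, permsOn_image hg]
  have hsumB : (∑ y ∈ B, ((g y : ℕ) : ℤ)) = ∑ x ∈ B.image g, ((x : ℕ) : ℤ) := by
    rw [Finset.sum_image (fun x _ y _ h => g.injective h)]
  have hEsplit : (∑ y ∈ A ∪ B, ((g y : ℕ) : ℤ)) = (∑ y ∈ A, ((g y : ℕ) : ℤ)) + ∑ y ∈ B, ((g y : ℕ) : ℤ) :=
    Finset.sum_union hdisj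
  have hEsplit2 : (∑ y ∈ A ∪ B, ((y : ℕ) : ℤ)) = (∑ y ∈ A, ((y : ℕ) : ℤ)) + ∑ y ∈ B, ((y : ℕ) : ℤ) :=
    Finset.sum_union hdisj
  have hfinal : (∑ y ∈ A, (((g y : ℕ) : ℤ) - ((y : ℕ) : ℤ)) * (j : ℤ))
        + (∑ y ∈ B, (((g y : ℕ) : ℤ) - ((y : ℕ) : ℤ)) * ((j : ℤ) + 1))
      = ((∑ x ∈ B.image g, ((x : ℕ) : ℤ)) - ∑ x ∈ B, ((x : ℕ) : ℤ)) := by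
    rw [← hsumB]
    have hA' : (∑ y ∈ A, (((g y : ℕ) : ℤ) - ((y : ℕ) : ℤ)) * (j : ℤ))
        = ((∑ y ∈ A, ((g y : ℕ) : ℤ)) - ∑ y ∈ A, ((y : ℕ) : ℤ)) * (j : ℤ) := by
      rw [← Finset.sum_sub_distrib, ← Finset.sum_mul]
    have hB' : (∑ y ∈ B, (((g y : ℕ) : ℤ) - ((y : ℕ) : ℤ)) * ((j : ℤ) + 1))
        = ((∑ y ∈ B, ((g y : ℕ) : ℤ)) - ∑ y ∈ B, ((y : ℕ) : ℤ)) * ((j : ℤ) + 1) := by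
      rw [← Finset.sum_sub_distrib, ← Finset.sum_mul]
    rw [hA', hB']
    have hz : (∑ y ∈ A, ((g y : ℕ) : ℤ)) - (∑ y ∈ A, ((y : ℕ) : ℤ))
        = - ((∑ y ∈ B, ((g y : ℕ) : ℤ)) - ∑ y ∈ B, ((y : ℕ) : ℤ)) := by
      have := hsumE
      rw [hEsplit, hEsplit2] at this
      linarith
    rw [hz]
    ring
  linarith [e3, e4, e5, hfinal]

lemma m1_garnir_lt (T : Tab lam n) (A B : Finset (Fin n)) (j : ℕ)
    (hA : ∀ a ∈ A, cellCol (T.symm a) = j) (hB : ∀ b ∈ B, cellCol (T.symm b) = j + 1)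
    (hdisj : Disjoint A B)
    (hAB : ∀ a ∈ A, ∀ b ∈ B, (b : ℕ) < (a : ℕ))
    {g : Perm (Fin n)} (hg : g ∈ permsOn (A ∪ B)) (himg : B.image g ≠ B) :
    m1 T < m1 (T.trans g) := by
  have hiden := m1_garnir T A B j hA hB hdisj hg
  have hBE : B ⊆ A ∪ B := Finset.subset_union_right
  have himgE : B.image g ⊆ A ∪ B := by
    rw [← permsOn_image hg]
    exact Finset.image_subset_image hBE
  have hcardimg : (B.image g).card = B.card := Finset.card_image_of_injective _ g.injective
  set X := (B.image g) \ B with hX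
  set Y := B \ (B.image g) with hY
  have hcX : X.card = Y.card := by
    rw [hX, hY]
    have h1 := Finset.card_sdiff_add_card_inter (B.image g) B
    have h2 := Finset.card_sdiff_add_card_inter B (B.image g)
    rw [Finset.inter_comm] at h2
    omega
  have hYne : Y.Nonempty := by
    rw [Finset.nonempty_iff_ne_empty]
    intro hcon
    have hsub : B ⊆ B.image g := by
      rw [← Finset.sdiff_eq_empty_iff_subset]
      exact hcon
    have : B = B.image g := Finset.eq_of_subset_of_card_le hsub (le_of_eq hcardimg)
    exact himg this.symm
  have hlt := sum_lt_sum_fin X Y hcX hYne (by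
    intro x hx y hy
    rw [hX, Finset.mem_sdiff] at hx
    rw [hY, Finset.mem_sdiff] at hy
    have hxA : x ∈ A := by
      have := himgE hx.1
      rw [Finset.mem_union] at this
      tauto
    exact hAB x hxA y hy.1)
  have hs1 : (∑ x ∈ B.image g, ((x : ℕ) : ℤ))
      = (∑ x ∈ (B.image g).filter (· ∈ B), ((x : ℕ) : ℤ)) + ∑ x ∈ X, ((x : ℕ) : ℤ) := by
    rw [hX, Finset.sdiff_eq_filter]
    exact (Finset.sum_filter_add_sum_filter_not _ _ _).symm
  have hs2 : (∑ x ∈ B, ((x : ℕ) : ℤ))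
      = (∑ x ∈ B.filter (· ∈ B.image g), ((x : ℕ) : ℤ)) + ∑ x ∈ Y, ((x : ℕ) : ℤ) := by
    rw [hY, Finset.sdiff_eq_filter]
    exact (Finset.sum_filter_add_sum_filter_not _ _ _).symm
  have hinter : (∑ x ∈ (B.image g).filter (· ∈ B), ((x : ℕ) : ℤ))
      = ∑ x ∈ B.filter (· ∈ B.image g), ((x : ℕ) : ℤ) := by
    congr 1
    rw [Finset.filter_mem_eq_inter, Finset.filter_mem_eq_inter, Finset.inter_comm]
  have : (0 : ℤ) < (m1 (T.trans g) : ℤ) - (m1 T : ℤ) := by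
    rw [hiden]
    have : (∑ x ∈ B, ((x : ℕ) : ℤ)) < ∑ x ∈ B.image g, ((x : ℕ) : ℤ) := by
      rw [hs1, hs2, hinter]
      linarith
    linarith
  omega

lemma key_mem (hlam : lam.card = n) (c d : Cell lam → ℕ) (T : Tab lam n) :
    FTcd T c d ∈ Submodule.span ℂ
      (Set.range fun S : {S : Tab lam n // IsSYT S} => FTcd S.1 c d) := by
  set Sp := Submodule.span ℂ
      (Set.range fun S : {S : Tab lam n // IsSYT S} => FTcd S.1 c d) with hSp
  set M := n ^ 3 + 1 with hM
  suffices H : ∀ (k : ℕ) (T : Tab lam n), M * n ^ 3 + n ^ 3 < M * m1 T + m2 T + k →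
      FTcd T c d ∈ Sp by
    exact H (M * n ^ 3 + n ^ 3 + 1) T (by omega)
  intro k
  induction k with
  | zero =>
    intro T hT
    have h1 : m1 T ≤ n ^ 3 := m1_le hlam T
    have h2 : m2 T ≤ n ^ 3 := m2_le hlam T
    have h3 : M * m1 T ≤ M * n ^ 3 := Nat.mul_le_mul_left M h1
    omega
  | succ k ih =>
    intro T hT
    by_cases hcol : ∃ a b : Cell lam, cellCol a = cellCol b ∧ cellRow a < cellRow b ∧ T b < T a
    · -- a column inversion : swap it
      obtain ⟨a, b, hcc, hrr, hvv⟩ := hcol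
      have hab : a ≠ b := fun h => by rw [h] at hrr; exact lt_irrefl _ hrr
      have htcol : Equiv.swap (T a) (T b) ∈ colGroup T := by
        rw [colGroup_eq_wGroup]
        apply swap_mem_wGroup
        rw [Equiv.symm_apply_apply, Equiv.symm_apply_apply, hcc]
      have hF := FTcd_smul_of_colGroup T c d htcol
      have hsign : sign (Equiv.swap (T a) (T b)) = -1 :=
        sign_swap (fun h => hab (T.injective h))
      rw [hsign] at hF
      have hF2 : FTcd T c d = (-1 : ℂ) • FTcd (T.trans (Equiv.swap (T a) (T b))) c d := by
        rw [hF, smul_smul]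
        norm_num
      rw [hF2]
      apply Submodule.smul_mem
      apply ih
      have e1 : m1 (T.trans (Equiv.swap (T a) (T b))) = m1 T := m1_swap_same_col T hab hcc
      have e2 : m2 T < m2 (T.trans (Equiv.swap (T a) (T b))) :=
        m2_swap_gt T hrr hvv
      rw [e1]
      omega
    · by_cases hdesc : ∃ a b : Cell lam,
          cellRow a = cellRow b ∧ cellCol b = cellCol a + 1 ∧ T b < T a
      · -- a row descent between adjacent columns : Garnir relation
        obtain ⟨a0, b0, hr0, hc0, hv0⟩ := hdesc
        push_neg at hcol
        have hmono : ∀ p q : Cell lam, cellCol p = cellCol q → cellRow p ≤ cellRow q →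
            (T p : ℕ) ≤ (T q : ℕ) := by
          intro p q hc hr
          rcases eq_or_lt_of_le hr with h | h
          · have : p = q := Subtype.ext (Prod.ext h hc)
            rw [this]
          · exact hcol p q hc h
        set r := cellRow a0 with hrdef
        set j := cellCol a0 with hjdef
        have hb0r : cellRow b0 = r := hr0.symm
        have hb0c : cellCol b0 = j + 1 := hc0
        set A : Finset (Fin n) := Finset.univ.filter
          (fun x : Fin n => cellCol (T.symm x) = j ∧ r ≤ cellRow (T.symm x)) with hAdef
        set B : Finset (Fin n) := Finset.univ.filter
          (fun x : Fin n => cellCol (T.symm x) = j + 1 ∧ cellRow (T.symm x) ≤ r) with hBdef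
        have hA : ∀ x ∈ A, cellCol (T.symm x) = j := by
          intro x hx
          rw [hAdef, Finset.mem_filter] at hx
          exact hx.2.1
        have hB : ∀ x ∈ B, cellCol (T.symm x) = j + 1 := by
          intro x hx
          rw [hBdef, Finset.mem_filter] at hx
          exact hx.2.1
        have hdisj : Disjoint A B := by
          rw [Finset.disjoint_left]
          intro x h1 h2
          have := hA x h1
          have := hB x h2
          omega
        have hAB : ∀ x ∈ A, ∀ y ∈ B, (y : ℕ) < (x : ℕ) := by
          intro x hx y hy
          rw [hAdef, Finset.mem_filter] at hx
          rw [hBdef, Finset.mem_filter] at hy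
          have h1 : (T a0 : ℕ) ≤ (T (T.symm x) : ℕ) := by
            apply hmono a0 (T.symm x) (hx.2.1).symm hx.2.2
          have h2 : (T (T.symm y) : ℕ) ≤ (T b0 : ℕ) := by
            apply hmono (T.symm y) b0
            · rw [hy.2.1, hb0c]
            · rw [hb0r]; exact hy.2.2
          rw [Equiv.apply_symm_apply] at h1 h2
          have h3 : (T b0 : ℕ) < (T a0 : ℕ) := hv0
          omega
        -- cardinality bounds
        have hrcl : r < lam.colLen j := by
          rw [← YoungDiagram.mem_iff_lt_colLen]
          exact (lam.mem_cells a0.1).1 a0.2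
        have hAcard : lam.colLen j - r ≤ A.card := by
          have hmaps : ∀ i ∈ Finset.Ico r (lam.colLen j),
              (fun i => if h : ((i, j) : ℕ × ℕ) ∈ lam
                then T ⟨(i, j), (lam.mem_cells _).2 h⟩ else T a0) i ∈ A := by
            intro i hi
            rw [Finset.mem_Ico] at hi
            have hm : ((i, j) : ℕ × ℕ) ∈ lam := YoungDiagram.mem_iff_lt_colLen.2 hi.2
            simp only [dif_pos hm, hAdef, Finset.mem_filter]
            refine ⟨Finset.mem_univ _, ?_, ?_⟩
            · rw [Equiv.symm_apply_apply]
              rfl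
            · rw [Equiv.symm_apply_apply]
              exact hi.1
          have hinj : Set.InjOn (fun i => if h : ((i, j) : ℕ × ℕ) ∈ lam
              then T ⟨(i, j), (lam.mem_cells _).2 h⟩ else T a0) (Finset.Ico r (lam.colLen j)) := by
            intro i1 h1 i2 h2 heq
            rw [Finset.coe_Ico, Set.mem_Ico] at h1 h2
            have hm1 : ((i1, j) : ℕ × ℕ) ∈ lam := YoungDiagram.mem_iff_lt_colLen.2 h1.2
            have hm2 : ((i2, j) : ℕ × ℕ) ∈ lam := YoungDiagram.mem_iff_lt_colLen.2 h2.2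
            simp only [dif_pos hm1, dif_pos hm2] at heq
            have := T.injective heq
            have := congrArg (fun z : Cell lam => z.1.1) this
            exact this
          have := Finset.card_le_card_of_injOn _ hmaps hinj
          rw [Nat.card_Ico] at this
          exact this
        have hBcard : r + 1 ≤ B.card := by
          have hb0mem : ((r, j + 1) : ℕ × ℕ) ∈ lam := by
            have := (lam.mem_cells b0.1).1 b0.2
            have hb1 : b0.1 = ((r, j + 1) : ℕ × ℕ) := by
              rw [← hb0r, ← hb0c]
              rfl
            rwa [hb1] at this
          have hmaps : ∀ i ∈ Finset.range (r + 1),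
              (fun i => if h : ((i, j + 1) : ℕ × ℕ) ∈ lam
                then T ⟨(i, j + 1), (lam.mem_cells _).2 h⟩ else T a0) i ∈ B := by
            intro i hi
            rw [Finset.mem_range] at hi
            have hm : ((i, j + 1) : ℕ × ℕ) ∈ lam :=
              lam.up_left_mem (Nat.lt_succ_iff.1 hi) (le_refl _) hb0mem
            simp only [dif_pos hm, hBdef, Finset.mem_filter]
            refine ⟨Finset.mem_univ _, ?_, ?_⟩
            · rw [Equiv.symm_apply_apply]
              rfl
            · rw [Equiv.symm_apply_apply]
              exact Nat.lt_succ_iff.1 hi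
          have hinj : Set.InjOn (fun i => if h : ((i, j + 1) : ℕ × ℕ) ∈ lam
              then T ⟨(i, j + 1), (lam.mem_cells _).2 h⟩ else T a0) (Finset.range (r + 1)) := by
            intro i1 h1 i2 h2 heq
            rw [Finset.coe_range, Set.mem_Iio] at h1 h2
            have hm1 : ((i1, j + 1) : ℕ × ℕ) ∈ lam :=
              lam.up_left_mem (Nat.lt_succ_iff.1 h1) (le_refl _) hb0mem
            have hm2 : ((i2, j + 1) : ℕ × ℕ) ∈ lam :=
              lam.up_left_mem (Nat.lt_succ_iff.1 h2) (le_refl _) hb0mem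
            simp only [dif_pos hm1, dif_pos hm2] at heq
            have := T.injective heq
            have := congrArg (fun z : Cell lam => z.1.1) this
            exact this
          have := Finset.card_le_card_of_injOn _ hmaps hinj
          rw [Finset.card_range] at this
          exact this
        have hcard : lam.colLen j < A.card + B.card := by omega
        apply garnir_span T c d A B j hA hB hcard Sp
        intro g hg himg
        apply ih
        have hm1lt : m1 T < m1 (T.trans g) :=
          m1_garnir_lt T A B j hA hB hdisj hAB hg himg
        have hm2le : m2 T ≤ n ^ 3 := m2_le hlam T
        have hmul : M * m1 T + M ≤ M * m1 (T.trans g) := by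
          have h4 : m1 T + 1 ≤ m1 (T.trans g) := hm1lt
          calc M * m1 T + M = M * (m1 T + 1) := by ring
            _ ≤ M * m1 (T.trans g) := Nat.mul_le_mul_left M h4
        omega
      · -- no inversion, no descent : T is standard
        push_neg at hcol hdesc
        have hcolS : ∀ a b : Cell lam, cellCol a = cellCol b → cellRow a < cellRow b →
            T a < T b := by
          intro a b h1 h2
          have h3 := hcol a b h1 h2
          have hne : T a ≠ T b := fun h => by
            have := T.injective h
            rw [this] at h2
            exact lt_irrefl _ h2
          exact lt_of_le_of_ne h3 hne
        have hadj : ∀ a b : Cell lam, cellRow a = cellRow b → cellCol b = cellCol a + 1 →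
            T a < T b := by
          intro a b h1 h2
          have h3 := hdesc a b h1 h2
          have hne : T a ≠ T b := fun h => by
            have := T.injective h
            rw [this] at h2
            omega
          exact lt_of_le_of_ne h3 hne
        have hgap : ∀ k : ℕ, ∀ a b : Cell lam, cellRow a = cellRow b →
            cellCol b = cellCol a + k + 1 → T a < T b := by
          intro k
          induction k with
          | zero =>
            intro a b h1 h2
            exact hadj a b h1 (by omega)
          | succ k ihk =>
            intro a b h1 h2
            have hmem : ((cellRow a, cellCol a + (k + 1)) : ℕ × ℕ) ∈ lam := by
              have hb : ((cellRow b, cellCol b) : ℕ × ℕ) ∈ lam := (lam.mem_cells b.1).1 b.2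
              exact lam.up_left_mem (le_of_eq h1) (by omega) hb
            set cmid : Cell lam := ⟨(cellRow a, cellCol a + (k + 1)), (lam.mem_cells _).2 hmem⟩
              with hcmid
            have e1 : T a < T cmid := ihk a cmid rfl rfl
            have e2 : T cmid < T b := by
              apply hadj cmid b
              · rw [← h1]
                rfl
              · show cellCol b = cellCol a + (k + 1) + 1
                omega
            exact lt_trans e1 e2
        have hrowS : ∀ a b : Cell lam, cellRow a = cellRow b → cellCol a < cellCol b →
            T a < T b := by
          intro a b h1 h2
          exact hgap (cellCol b - cellCol a - 1) a b h1 (by omega)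
        exact Submodule.subset_span ⟨⟨T, hrowS, hcolS⟩, rfl⟩

end Aux
/-- For any exponent functions `c, d` on the cells of `λ`,
`span{F_T^{c,d} : T ∈ Tab(λ)} = span{F_T^{c,d} : T ∈ SYT(λ)}`. -/
theorem stmt13 (n : ℕ) (hn : 1 ≤ n)
    (lam : YoungDiagram) (hlam : lam.card = n)
    (c d : Cell lam → ℕ) :
    Submodule.span ℂ (Set.range fun T : Tab lam n => FTcd T c d) =
      Submodule.span ℂ (Set.range fun T : {T : Tab lam n // IsSYT T} => FTcd T.1 c d) := by
  apply le_antisymm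
  · rw [Submodule.span_le]
    rintro x ⟨T, rfl⟩
    exact key_mem hlam c d T
  · apply Submodule.span_mono
    rintro x ⟨S, rfl⟩
    exact ⟨S.1, rfl⟩
end
end
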